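/- Let W' be a reflection subgroup of W, let i ∈ {1,2}, and let x, y ∈ Δ_i(W') with r_x ≠ r_y. Let n be the order of r_x·r_y (possibly infinite). Then for every integer m with 0 ≤ m < n, the alternating product (⋯r_y r_x r_y) with m factors (ending in r_y) applied to x lies in Φ_i⁺, and the alternating product (⋯r_x r_y r_x) with m factors (ending in r_x) applied to y lies in Φ_i⁺. -/
import Mathlib


open Pointwise

/-- The positive linear cone of a subset `A` of a real vector space: finite linear
combinations of elements of `A` with all coefficients nonnegative and at least one
strictly positive. -/
def PLC {V : Type*} [AddCommGroup V] [Module ℝ V] (A : Set V) : Set V :=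
  { v | ∃ c : V →₀ ℝ, (∀ a, 0 ≤ c a) ∧ ↑c.support ⊆ A ∧ c ≠ 0 ∧
          v = c.sum fun a t => t • a }

/-- `altEnd a b m` is the alternating product `⋯ a b a b` … of `m` factors,
ending with `b` (e.g. `altEnd a b 3 = b * a * b`). -/
def altEnd {G : Type*} [Monoid G] : G → G → ℕ → G
  | _, _, 0 => 1
  | a, b, m + 1 => altEnd b a m * b

/-- The class of `z` under the equivalence "being nonzero scalar multiples of each
other" (the class `ẑ`). -/
def rayClass {V : Type*} [AddCommGroup V] [Module ℝ V] (z : V) : Set V :=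
  { v | ∃ c : ℝ, c ≠ 0 ∧ v = c • z }

/-- The set `Â = {ẑ : z ∈ A}` of scalar-equivalence classes of elements of `A`. -/
def rayClasses {V : Type*} [AddCommGroup V] [Module ℝ V] (A : Set V) : Set (Set V) :=
  { C | ∃ z ∈ A, C = rayClass z }

/-- A Coxeter datum `(S, V₁, V₂, Π₁, Π₂, ⟨·,·⟩)` satisfying (D1)–(D5), together with
its associated abstract Coxeter group `W` (a group generated by involutions
`r s`, acting faithfully on `V₁` and `V₂` in the prescribed way, with the pairing
`W`-invariant), the decomposition `Φᵢ = Φᵢ⁺ ⊎ Φᵢ⁻` of the paired root systems, the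
`W`-equivariant bijection `φ : Φ₁ → Φ₂` (with inverse `phiInv`), and the reflections
`r_x ∈ T` attached to the roots `x ∈ Φ₁` (`refl₁`) resp. `y ∈ Φ₂` (`refl₂`). -/
structure CoxeterDatum (S : Type*) (V₁ : Type*) (V₂ : Type*) (W : Type*)
    [AddCommGroup V₁] [Module ℝ V₁] [AddCommGroup V₂] [Module ℝ V₂] [Group W] where
  pair : V₁ →ₗ[ℝ] V₂ →ₗ[ℝ] ℝ
  α : S → V₁
  β : S → V₂
  α_inj : Function.Injective α
  β_inj : Function.Injective β
  D1 : ∀ s, pair (α s) (β s) = 1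
  D2a : (0 : V₁) ∉ PLC (Set.range α)
  D2b : (0 : V₂) ∉ PLC (Set.range β)
  D2c : ∀ s, α s ∉ PLC (Set.range α \ {α s})
  D2d : ∀ s, β s ∉ PLC (Set.range β \ {β s})
  D3 : ∀ s t, s ≠ t → pair (α s) (β t) ≤ 0
  D4 : ∀ s t, pair (α s) (β t) = 0 → pair (α t) (β s) = 0
  D5 : ∀ s t, s ≠ t →
    (∃ m : ℕ, 2 ≤ m ∧ pair (α s) (β t) * pair (α t) (β s) = Real.cos (Real.pi / m) ^ 2) ∨
      1 ≤ pair (α s) (β t) * pair (α t) (β s)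
  /-- the Coxeter generators `R = {r s : s ∈ S}` of `W` -/
  r : S → W
  r_gen : Subgroup.closure (Set.range r) = ⊤
  r_ne_one : ∀ s, r s ≠ 1
  r_sq : ∀ s, r s * r s = 1
  /-- the faithful action of `W` on `V₁` -/
  ρ₁ : W →* Module.End ℝ V₁
  /-- the faithful action of `W` on `V₂` -/
  ρ₂ : W →* Module.End ℝ V₂
  ρ₁_inj : Function.Injective ρ₁
  ρ₂_inj : Function.Injective ρ₂
  hr₁ : ∀ s x, ρ₁ (r s) x = x - (2 * pair x (β s)) • α s
  hr₂ : ∀ s y, ρ₂ (r s) y = y - (2 * pair (α s) y) • β s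
  pair_inv : ∀ w x y, pair (ρ₁ w x) (ρ₂ w y) = pair x y
  /-- the `W`-equivariant bijection `φ : Φ₁ → Φ₂` -/
  phi : V₁ → V₂
  /-- the inverse `φ⁻¹ : Φ₂ → Φ₁` -/
  phiInv : V₂ → V₁
  /-- the reflection `r_x` corresponding to a root `x ∈ Φ₁` -/
  refl₁ : V₁ → W
  /-- the reflection `r_y` corresponding to a root `y ∈ Φ₂` -/
  refl₂ : V₂ → W
  decomp₁ : { v | ∃ w s, v = ρ₁ w (α s) } =
      ({ v | ∃ w s, v = ρ₁ w (α s) } ∩ PLC (Set.range α)) ∪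
        (-({ v | ∃ w s, v = ρ₁ w (α s) } ∩ PLC (Set.range α)))
  disj₁ : Disjoint ({ v | ∃ w s, v = ρ₁ w (α s) } ∩ PLC (Set.range α))
      (-({ v | ∃ w s, v = ρ₁ w (α s) } ∩ PLC (Set.range α)))
  decomp₂ : { v | ∃ w s, v = ρ₂ w (β s) } =
      ({ v | ∃ w s, v = ρ₂ w (β s) } ∩ PLC (Set.range β)) ∪
        (-({ v | ∃ w s, v = ρ₂ w (β s) } ∩ PLC (Set.range β)))
  disj₂ : Disjoint ({ v | ∃ w s, v = ρ₂ w (β s) } ∩ PLC (Set.range β))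
      (-({ v | ∃ w s, v = ρ₂ w (β s) } ∩ PLC (Set.range β)))
  phi_mem : ∀ x ∈ { v | ∃ w s, v = ρ₁ w (α s) }, phi x ∈ { v | ∃ w s, v = ρ₂ w (β s) }
  phiInv_mem : ∀ y ∈ { v | ∃ w s, v = ρ₂ w (β s) }, phiInv y ∈ { v | ∃ w s, v = ρ₁ w (α s) }
  phiInv_phi : ∀ x ∈ { v | ∃ w s, v = ρ₁ w (α s) }, phiInv (phi x) = x
  phi_phiInv : ∀ y ∈ { v | ∃ w s, v = ρ₂ w (β s) }, phi (phiInv y) = y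
  phi_simple : ∀ s, phi (α s) = β s
  phi_equiv : ∀ w, ∀ x ∈ { v | ∃ w s, v = ρ₁ w (α s) }, phi (ρ₁ w x) = ρ₂ w (phi x)
  refl₁_eq : ∀ w s, refl₁ (ρ₁ w (α s)) = w * r s * w⁻¹
  refl₂_eq : ∀ w s, refl₂ (ρ₂ w (β s)) = w * r s * w⁻¹
  refl₁_act : ∀ x ∈ { v | ∃ w s, v = ρ₁ w (α s) }, ∀ v,
      ρ₁ (refl₁ x) v = v - (2 * pair v (phi x)) • x
  refl₂_act : ∀ y ∈ { v | ∃ w s, v = ρ₂ w (β s) }, ∀ v,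
      ρ₂ (refl₂ y) v = v - (2 * pair (phiInv y) v) • y

namespace CoxeterDatum

variable {S V₁ V₂ W : Type*} [AddCommGroup V₁] [Module ℝ V₁]
  [AddCommGroup V₂] [Module ℝ V₂] [Group W]

variable (D : CoxeterDatum S V₁ V₂ W)

/-- The root system `Φ₁ = W Π₁`. -/
def Phi₁ : Set V₁ := { v | ∃ w s, v = D.ρ₁ w (D.α s) }

/-- The root system `Φ₂ = W Π₂`. -/
def Phi₂ : Set V₂ := { v | ∃ w s, v = D.ρ₂ w (D.β s) }

/-- The positive roots `Φ₁⁺ = Φ₁ ∩ PLC Π₁`. -/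
def PhiPos₁ : Set V₁ := D.Phi₁ ∩ PLC (Set.range D.α)

/-- The positive roots `Φ₂⁺ = Φ₂ ∩ PLC Π₂`. -/
def PhiPos₂ : Set V₂ := D.Phi₂ ∩ PLC (Set.range D.β)

/-- The negative roots `Φ₁⁻ = -Φ₁⁺`. -/
def PhiNeg₁ : Set V₁ := -D.PhiPos₁

/-- The negative roots `Φ₂⁻ = -Φ₂⁺`. -/
def PhiNeg₂ : Set V₂ := -D.PhiPos₂

/-- The set `T = ⋃_{w ∈ W} w R w⁻¹` of reflections of `W`. -/
def T : Set W := { t | ∃ w s, t = w * D.r s * w⁻¹ }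

/-- The length function `ℓ` of `W` with respect to the Coxeter generators `R`. -/
noncomputable def len (w : W) : ℕ :=
  sInf { n | ∃ l : List S, l.length = n ∧ (l.map D.r).prod = w }

/-- `N̄ w = {t ∈ T : ℓ(w t) < ℓ(w)}`. -/
noncomputable def Nbar (w : W) : Set W :=
  { t | t ∈ D.T ∧ D.len (w * t) < D.len w }

/-- `N₁ w = {ẑ : z ∈ Φ₁⁺, w z ∈ Φ₁⁻}`. -/
def N₁ (w : W) : Set (Set V₁) :=
  { C | ∃ z, z ∈ D.PhiPos₁ ∧ D.ρ₁ w z ∈ D.PhiNeg₁ ∧ C = rayClass z }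

/-- `N₂ w = {ẑ : z ∈ Φ₂⁺, w z ∈ Φ₂⁻}`. -/
def N₂ (w : W) : Set (Set V₂) :=
  { C | ∃ z, z ∈ D.PhiPos₂ ∧ D.ρ₂ w z ∈ D.PhiNeg₂ ∧ C = rayClass z }

/-- A subgroup `W'` of `W` is a reflection subgroup when `W' = ⟨W' ∩ T⟩`. -/
def IsReflectionSubgroup (W' : Subgroup W) : Prop :=
  W' = Subgroup.closure ((W' : Set W) ∩ D.T)

/-- `Φ₁(W') = {x ∈ Φ₁ : r_x ∈ W'}`. -/
def PhiSub₁ (W' : Subgroup W) : Set V₁ :=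
  { x | x ∈ D.Phi₁ ∧ D.refl₁ x ∈ W' }

/-- `Φ₂(W') = {y ∈ Φ₂ : r_y ∈ W'}`. -/
def PhiSub₂ (W' : Subgroup W) : Set V₂ :=
  { y | y ∈ D.Phi₂ ∧ D.refl₂ y ∈ W' }

/-- The canonical generators `S(W') = {t ∈ T : N̄(t) ∩ W' = {t}}`. -/
noncomputable def SW (W' : Subgroup W) : Set W :=
  { t | t ∈ D.T ∧ D.Nbar t ∩ (W' : Set W) = {t} }

/-- `Δ₁(W') = {x ∈ Φ₁⁺ : r_x ∈ S(W')}`. -/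
noncomputable def Delta₁ (W' : Subgroup W) : Set V₁ :=
  { x | x ∈ D.PhiPos₁ ∧ D.refl₁ x ∈ D.SW W' }

/-- `Δ₂(W') = {y ∈ Φ₂⁺ : r_y ∈ S(W')}`. -/
noncomputable def Delta₂ (W' : Subgroup W) : Set V₂ :=
  { y | y ∈ D.PhiPos₂ ∧ D.refl₂ y ∈ D.SW W' }

/-- The length function `ℓ_{W'}` of a reflection subgroup `W'` with respect to its
canonical generators `S(W')`. -/
noncomputable def lenIn (W' : Subgroup W) (w : W) : ℕ :=
  sInf { n | ∃ l : List W, l.length = n ∧ (∀ t ∈ l, t ∈ D.SW W') ∧ l.prod = w }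

end CoxeterDatum

/-! ### Auxiliary development for Statement 17 -/

namespace CoxeterDatum

variable {S V₁ V₂ W : Type*} [AddCommGroup V₁] [Module ℝ V₁]
  [AddCommGroup V₂] [Module ℝ V₂] [Group W]

variable (D : CoxeterDatum S V₁ V₂ W)

section Basics

lemma mem_Phi₁_iff {z : V₁} : z ∈ D.Phi₁ ↔ ∃ w s, z = D.ρ₁ w (D.α s) := Iff.rfl

lemma rho_mem_Phi₁ (g : W) {z : V₁} (hz : z ∈ D.Phi₁) : D.ρ₁ g z ∈ D.Phi₁ := by
  obtain ⟨w, s, rfl⟩ := hz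
  exact ⟨g * w, s, by rw [map_mul, Module.End.mul_apply]⟩

lemma simple_mem_Phi₁ (s : S) : D.α s ∈ D.Phi₁ :=
  ⟨1, s, by rw [map_one, Module.End.one_apply]⟩

lemma pos_subset_Phi₁ : D.PhiPos₁ ⊆ D.Phi₁ := Set.inter_subset_left

lemma neg_subset_Phi₁ : D.PhiNeg₁ ⊆ D.Phi₁ := by
  intro z hz
  have h := D.decomp₁
  have : z ∈ ({ v | ∃ w s, v = D.ρ₁ w (D.α s) } ∩ PLC (Set.range D.α)) ∪
      (-({ v | ∃ w s, v = D.ρ₁ w (D.α s) } ∩ PLC (Set.range D.α))) := Or.inr hz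
  rw [← h] at this
  exact this

lemma pos_or_neg {z : V₁} (hz : z ∈ D.Phi₁) : z ∈ D.PhiPos₁ ∨ z ∈ D.PhiNeg₁ := by
  have h := D.decomp₁
  have hz' : z ∈ ({ v | ∃ w s, v = D.ρ₁ w (D.α s) } ∩ PLC (Set.range D.α)) ∪
      (-({ v | ∃ w s, v = D.ρ₁ w (D.α s) } ∩ PLC (Set.range D.α))) := by
    rw [← h]; exact hz
  exact hz'

lemma not_pos_and_neg {z : V₁} (hp : z ∈ D.PhiPos₁) (hn : z ∈ D.PhiNeg₁) : False :=
  Set.disjoint_left.mp D.disj₁ hp hn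

lemma phi_rho {z : V₁} (hz : z ∈ D.Phi₁) (w : W) :
    D.phi (D.ρ₁ w z) = D.ρ₂ w (D.phi z) := D.phi_equiv w z hz

lemma phi_mem_Phi₂ {z : V₁} (hz : z ∈ D.Phi₁) : D.phi z ∈ D.Phi₂ := D.phi_mem z hz

lemma pair_phi_self {z : V₁} (hz : z ∈ D.Phi₁) : D.pair z (D.phi z) = 1 := by
  obtain ⟨w, s, rfl⟩ := hz
  rw [D.phi_rho (D.simple_mem_Phi₁ s) w, D.phi_simple, D.pair_inv, D.D1]

lemma refl₁_conj {z : V₁} (hz : z ∈ D.Phi₁) (g : W) :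
    D.refl₁ (D.ρ₁ g z) = g * D.refl₁ z * g⁻¹ := by
  obtain ⟨w, s, rfl⟩ := hz
  have h1 : D.ρ₁ g (D.ρ₁ w (D.α s)) = D.ρ₁ (g * w) (D.α s) := by
    rw [map_mul, Module.End.mul_apply]
  rw [h1, D.refl₁_eq, D.refl₁_eq, mul_inv_rev]
  group

lemma refl₁_sq {z : V₁} (hz : z ∈ D.Phi₁) : D.refl₁ z * D.refl₁ z = 1 := by
  obtain ⟨w, s, rfl⟩ := hz
  rw [D.refl₁_eq]
  have : w * D.r s * w⁻¹ * (w * D.r s * w⁻¹) = w * (D.r s * D.r s) * w⁻¹ := by group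
  rw [this, D.r_sq, mul_one, mul_inv_cancel]

lemma refl₁_mem_T {z : V₁} (hz : z ∈ D.Phi₁) : D.refl₁ z ∈ D.T := by
  obtain ⟨w, s, rfl⟩ := hz
  exact ⟨w, s, (D.refl₁_eq w s)⟩

lemma rho_refl₁_self {z : V₁} (hz : z ∈ D.Phi₁) : D.ρ₁ (D.refl₁ z) z = -z := by
  rw [D.refl₁_act z hz z, D.pair_phi_self hz]
  module

end Basics

end CoxeterDatum

namespace CoxeterDatum

variable {S V₁ V₂ W : Type*} [AddCommGroup V₁] [Module ℝ V₁]
  [AddCommGroup V₂] [Module ℝ V₂] [Group W]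

variable (D : CoxeterDatum S V₁ V₂ W)

section PLCLemmas

lemma vsum_smul {V : Type*} [AddCommGroup V] [Module ℝ V] (b : ℝ) (f : V →₀ ℝ) :
    (b • f).sum (fun a t => t • a) = b • f.sum (fun a t => t • a) := by
  rw [Finsupp.sum_smul_index' (fun i => zero_smul ℝ i), Finsupp.smul_sum]
  exact Finsupp.sum_congr fun a _ => by rw [smul_eq_mul, mul_smul]

lemma vsum_add {V : Type*} [AddCommGroup V] [Module ℝ V] (f g : V →₀ ℝ) :
    (f + g).sum (fun a t => t • a) = f.sum (fun a t => t • a) + g.sum (fun a t => t • a) :=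
  Finsupp.sum_add_index' (fun i => zero_smul ℝ i) (fun a b₁ b₂ => add_smul b₁ b₂ a)

/-- If `z` is a positive root made negative by a simple reflection `r s`, then
`z` is a positive multiple of `α s`. -/
lemma eq_smul_simple_of_neg (s : S) {z : V₁} (hz : z ∈ D.PhiPos₁)
    (hneg : D.ρ₁ (D.r s) z ∈ D.PhiNeg₁) : ∃ lam : ℝ, 0 < lam ∧ z = lam • D.α s := by
  classical
  obtain ⟨c, hc0, hcsupp, hcne, hcsum⟩ := hz.2
  have hneg' : -(D.ρ₁ (D.r s) z) ∈ D.PhiPos₁ := hneg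
  obtain ⟨c', hc'0, hc'supp, hc'ne, hc'sum⟩ := hneg'.2
  set d := 2 * D.pair z (D.β s) with hd
  have hrs : D.ρ₁ (D.r s) z = z - d • D.α s := D.hr₁ s z
  have hc'sum' : d • D.α s - z = c'.sum (fun a t => t • a) := by
    rw [← hc'sum, hrs]; abel
  have hsum : (c + c').sum (fun a t => t • a) = d • D.α s := by
    rw [vsum_add, ← hcsum, ← hc'sum']; abel
  have he0 : ∀ a, 0 ≤ (c + c') a := fun a => by
    rw [Finsupp.add_apply]; exact add_nonneg (hc0 a) (hc'0 a)
  have hesupp : ((c + c').support : Set V₁) ⊆ Set.range D.α := by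
    intro a ha
    rcases Finset.mem_union.mp (Finsupp.support_add (Finset.mem_coe.mp ha)) with h | h
    · exact hcsupp (Finset.mem_coe.mpr h)
    · exact hc'supp (Finset.mem_coe.mpr h)
  -- every element of the support of `c + c'` is `α s`
  have hsupp1 : ∀ a ∈ (c + c').support, a = D.α s := by
    intro a₀ ha₀
    by_contra hne0
    have ha₀pos : 0 < (c + c') a₀ :=
      lt_of_le_of_ne (he0 a₀) (Ne.symm (Finsupp.mem_support_iff.mp ha₀))
    rcases le_or_gt d 0 with hd0 | hd0
    · refine D.D2a ⟨(c + c') + Finsupp.single (D.α s) (-d), fun a => ?_, ?_, ?_, ?_⟩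
      · rw [Finsupp.add_apply]
        refine add_nonneg (he0 a) ?_
        rw [Finsupp.single_apply]
        split
        · linarith
        · exact le_refl 0
      · intro a ha
        rcases Finset.mem_union.mp (Finsupp.support_add (Finset.mem_coe.mp ha)) with h | h
        · exact hesupp (Finset.mem_coe.mpr h)
        · have h2 := Finsupp.support_single_subset h
          rw [Finset.mem_singleton] at h2
          exact h2 ▸ Set.mem_range_self s
      · intro h
        have h0 := congrArg (fun f => f a₀) h
        simp only [Finsupp.add_apply, Finsupp.coe_zero, Pi.zero_apply] at h0
        rw [Finsupp.single_apply, if_neg (fun h' => hne0 h'.symm)] at h0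
        rw [Finsupp.add_apply] at ha₀pos
        linarith
      · rw [vsum_add, hsum, Finsupp.sum_single_index (h := fun a t => t • a) (zero_smul ℝ _)]
        module
    · -- d > 0
      set e := d⁻¹ • (c + c') with hedef
      have hes : e.sum (fun a t => t • a) = D.α s := by
        rw [hedef, vsum_smul, hsum, smul_smul, inv_mul_cancel₀ hd0.ne', one_smul]
      have he0' : ∀ a, 0 ≤ e a := fun a => by
        rw [hedef, Finsupp.smul_apply, smul_eq_mul]
        exact mul_nonneg (inv_nonneg.mpr hd0.le) (he0 a)
      have hesupp' : (e.support : Set V₁) ⊆ Set.range D.α := by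
        intro a ha
        rw [hedef] at ha
        exact hesupp (Finset.mem_coe.mpr (Finsupp.support_smul (Finset.mem_coe.mp ha)))
      set μ := e (D.α s) with hμdef
      set f := e.erase (D.α s) with hfdef
      have hf0 : ∀ a, 0 ≤ f a := fun a => by
        rcases eq_or_ne a (D.α s) with h | h
        · rw [hfdef, h, Finsupp.erase_same]
        · rw [hfdef, Finsupp.erase_ne h]
          exact he0' a
      have hfsupp : (f.support : Set V₁) ⊆ Set.range D.α \ {D.α s} := by
        rw [hfdef]
        intro a ha
        simp only [Finsupp.support_erase, Finset.coe_erase, Set.mem_diff] at ha ⊢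
        exact ⟨hesupp' ha.1, ha.2⟩
      have hfa₀ : 0 < f a₀ := by
        rw [hfdef, Finsupp.erase_ne hne0, hedef, Finsupp.smul_apply, smul_eq_mul]
        exact mul_pos (inv_pos.mpr hd0) ha₀pos
      have hfs : f.sum (fun a t => t • a) + μ • D.α s = D.α s := by
        have := Finsupp.erase_add_single (D.α s) e
        calc f.sum (fun a t => t • a) + μ • D.α s
            = (f + Finsupp.single (D.α s) μ).sum (fun a t => t • a) := by
              rw [vsum_add, Finsupp.sum_single_index (h := fun a t => t • a) (zero_smul ℝ _)]
          _ = e.sum (fun a t => t • a) := by rw [hfdef, hμdef, this]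
          _ = D.α s := hes
      have hμ0 : 0 ≤ μ := he0' _
      rcases lt_or_ge μ 1 with hμ | hμ
      · refine D.D2c s ⟨(1 - μ)⁻¹ • f, fun a => ?_, ?_, ?_, ?_⟩
        · rw [Finsupp.smul_apply, smul_eq_mul]
          exact mul_nonneg (inv_nonneg.mpr (by linarith)) (hf0 a)
        · intro a ha
          exact hfsupp (Finset.mem_coe.mpr (Finsupp.support_smul (Finset.mem_coe.mp ha)))
        · intro h
          have := congrArg (fun g => g a₀) h
          simp only [Finsupp.smul_apply, smul_eq_mul, Finsupp.coe_zero, Pi.zero_apply] at this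
          have h1μ : (0:ℝ) < 1 - μ := by linarith
          rcases mul_eq_zero.mp this with h | h
          · exact absurd h (ne_of_gt (inv_pos.mpr h1μ))
          · exact hfa₀.ne' h
        · rw [vsum_smul]
          have hfsum : f.sum (fun a t => t • a) = (1 - μ) • D.α s := by
            rw [eq_sub_of_add_eq hfs]; module
          rw [hfsum, smul_smul, inv_mul_cancel₀ (by linarith), one_smul]
      · refine D.D2a ⟨f + Finsupp.single (D.α s) (μ - 1), fun a => ?_, ?_, ?_, ?_⟩
        · rw [Finsupp.add_apply]
          refine add_nonneg (hf0 a) ?_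
          rw [Finsupp.single_apply]; split
          · linarith
          · exact le_refl 0
        · intro a ha
          rcases Finset.mem_union.mp (Finsupp.support_add (Finset.mem_coe.mp ha)) with h | h
          · exact (subset_trans hfsupp Set.diff_subset) (Finset.mem_coe.mpr h)
          · have h2 := Finsupp.support_single_subset h
            rw [Finset.mem_singleton] at h2
            exact h2 ▸ Set.mem_range_self s
        · intro h
          have := congrArg (fun g => g a₀) h
          simp only [Finsupp.add_apply, Finsupp.coe_zero, Pi.zero_apply] at this
          rw [Finsupp.single_apply, if_neg (fun h' => hne0 h'.symm)] at this
          exact hfa₀.ne' (by linarith)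
        · rw [vsum_add, Finsupp.sum_single_index (h := fun a t => t • a) (zero_smul ℝ _)]
          rw [eq_sub_of_add_eq hfs]; module
  -- now conclude
  have hcz : c.support ⊆ {D.α s} := by
    intro a ha
    have : a ∈ (c + c').support := by
      rw [Finsupp.mem_support_iff, Finsupp.add_apply]
      have : 0 < c a := lt_of_le_of_ne (hc0 a) (Ne.symm (Finsupp.mem_support_iff.mp ha))
      have := add_pos_of_pos_of_nonneg this (hc'0 a)
      exact this.ne'
    rw [Finset.mem_singleton]
    exact hsupp1 a this
  have hcsingle : c = Finsupp.single (D.α s) (c (D.α s)) :=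
    Finsupp.support_subset_singleton.mp hcz
  have hzval : z = (c (D.α s)) • D.α s := by
    rw [hcsum, hcsingle, Finsupp.sum_single_index (h := fun a t => t • a) (zero_smul ℝ _),
      Finsupp.single_eq_same]
  refine ⟨c (D.α s), ?_, hzval⟩
  rcases lt_or_eq_of_le (hc0 (D.α s)) with h | h
  · exact h
  · exfalso
    exact hcne (by rw [hcsingle, ← h, Finsupp.single_zero])

end PLCLemmas

end CoxeterDatum

namespace CoxeterDatum

variable {S V₁ V₂ W : Type*} [AddCommGroup V₁] [Module ℝ V₁]
  [AddCommGroup V₂] [Module ℝ V₂] [Group W]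

variable (D : CoxeterDatum S V₁ V₂ W)

section RayLemma

/-- If a nonzero multiple of a simple root is a root, then its associated reflection
is the corresponding simple reflection. -/
lemma refl₁_ray (s : S) {lam : ℝ} (hlam : lam ≠ 0) (hz : lam • D.α s ∈ D.Phi₁) :
    D.refl₁ (lam • D.α s) = D.r s := by
  set z : V₁ := lam • D.α s with hzdef
  set t' : W := D.refl₁ z with ht'def
  set γ : V₂ := D.phi z with hγdef
  have hpair1 : D.pair z γ = 1 := D.pair_phi_self hz
  have hpairα : D.pair (D.α s) γ = lam⁻¹ := by
    have h0 : lam * D.pair (D.α s) γ = 1 := by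
      rw [← hpair1, hzdef, map_smul, LinearMap.smul_apply, smul_eq_mul]
    field_simp
    linarith [h0]
  have hpairβ : D.pair z (D.β s) = lam := by
    rw [hzdef, map_smul, LinearMap.smul_apply, smul_eq_mul, D.D1, mul_one]
  -- ρ₁ (r s) z = -z
  have h1 : D.ρ₁ (D.r s) z = -z := by
    rw [D.hr₁ s z, hpairβ, hzdef]; module
  -- ρ₁ t' z = -z
  have h2 : D.ρ₁ t' z = -z := D.rho_refl₁_self hz
  -- t' commutes with r s
  have hE1 : D.r s * t' * (D.r s)⁻¹ = t' := by
    rw [← D.refl₁_conj hz (D.r s), h1, ← h2, D.refl₁_conj hz t', ← ht'def]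
    group
  have hrsinv : (D.r s)⁻¹ = D.r s := inv_eq_of_mul_eq_one_right (D.r_sq s)
  have ht'sq : t' * t' = 1 := D.refl₁_sq hz
  have hq : (t' * D.r s) * (t' * D.r s) = 1 := by
    have hE1' := hE1
    rw [hrsinv] at hE1'
    calc (t' * D.r s) * (t' * D.r s) = t' * (D.r s * t' * D.r s) := by group
      _ = t' * t' := by rw [hE1']
      _ = 1 := ht'sq
  -- action of t' on V₂
  have hγmem : γ ∈ D.Phi₂ := D.phi_mem_Phi₂ hz
  have h3 : D.refl₂ γ = t' := by
    rw [hγdef, ht'def]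
    obtain ⟨w, s', hw⟩ := hz
    rw [hw, D.phi_rho (D.simple_mem_Phi₁ s') w, D.phi_simple, D.refl₂_eq, D.refl₁_eq]
  have ht'act : ∀ v : V₂, D.ρ₂ t' v = v - (2 * (lam * D.pair (D.α s) v)) • γ := by
    intro v
    rw [← h3, D.refl₂_act γ hγmem v, D.phiInv_phi z hz, hzdef, map_smul,
      LinearMap.smul_apply, smul_eq_mul]
  have hrs₂ : ∀ v : V₂, D.ρ₂ (D.r s) v = v - (2 * D.pair (D.α s) v) • D.β s := D.hr₂ s
  -- compute ρ₂ ((t' * r s)²) (β s)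
  have hstep1 : D.ρ₂ (t' * D.r s) (D.β s) = -D.β s + (2 * lam) • γ := by
    rw [map_mul, Module.End.mul_apply, hrs₂, D.D1, map_sub, map_smul, ht'act]
    simp only [D.D1]
    match_scalars <;> (field_simp; try ring)
  have hstep2 : D.ρ₂ (t' * D.r s) γ = (3:ℝ) • γ - (2 * lam⁻¹) • D.β s := by
    rw [map_mul, Module.End.mul_apply, hrs₂, hpairα, map_sub, map_smul, ht'act, ht'act]
    simp only [D.D1, hpairα]
    match_scalars <;> (field_simp; try ring)
  have hstep3 : D.β s = (-3 : ℝ) • D.β s + (4 * lam) • γ := by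
    have h4 : D.ρ₂ ((t' * D.r s) * (t' * D.r s)) (D.β s) = (-3 : ℝ) • D.β s + (4 * lam) • γ := by
      rw [map_mul, Module.End.mul_apply, hstep1, map_add, map_neg, map_smul, hstep1, hstep2]
      match_scalars <;> (field_simp; try ring)
    rw [hq, map_one, Module.End.one_apply] at h4
    exact h4
  have h7 : (4:ℝ) • (lam • γ) = (4:ℝ) • D.β s := by
    calc (4:ℝ) • (lam • γ) = ((-3 : ℝ) • D.β s + (4 * lam) • γ) + (3:ℝ) • D.β s := by module
      _ = D.β s + (3:ℝ) • D.β s := by rw [← hstep3]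
      _ = (4:ℝ) • D.β s := by module
  have hγval : lam • γ = D.β s := smul_right_injective V₂ (by norm_num : (4:ℝ) ≠ 0) h7
  have hfinal : D.ρ₂ t' = D.ρ₂ (D.r s) := by
    apply LinearMap.ext
    intro v
    rw [ht'act, hrs₂, ← hγval]
    match_scalars <;> (field_simp; try ring)
  exact D.ρ₂_inj hfinal

end RayLemma

end CoxeterDatum

namespace CoxeterDatum

variable {S V₁ V₂ W : Type*} [AddCommGroup V₁] [Module ℝ V₁]
  [AddCommGroup V₂] [Module ℝ V₂] [Group W]

variable (D : CoxeterDatum S V₁ V₂ W)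

section Length

lemma prod_map_inv (l : List S) :
    ((l.map D.r).prod)⁻¹ = (l.reverse.map D.r).prod := by
  induction l with
  | nil => simp
  | cons s l ih =>
    rw [List.map_cons, List.prod_cons, mul_inv_rev, ih, List.reverse_cons, List.map_append,
      List.prod_append, List.map_cons, List.map_nil, List.prod_cons, List.prod_nil, mul_one,
      inv_eq_of_mul_eq_one_right (D.r_sq s)]

lemma exists_word (w : W) : ∃ l : List S, (l.map D.r).prod = w := by
  have hw : w ∈ Subgroup.closure (Set.range D.r) := by rw [D.r_gen]; trivial
  induction hw using Subgroup.closure_induction with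
  | mem x hx =>
    obtain ⟨s, rfl⟩ := hx
    exact ⟨[s], by simp⟩
  | one => exact ⟨[], rfl⟩
  | mul x y _ _ hx hy =>
    obtain ⟨l₁, hl₁⟩ := hx
    obtain ⟨l₂, hl₂⟩ := hy
    exact ⟨l₁ ++ l₂, by rw [List.map_append, List.prod_append, hl₁, hl₂]⟩
  | inv x _ hx =>
    obtain ⟨l, hl⟩ := hx
    exact ⟨l.reverse, by rw [← D.prod_map_inv, hl]⟩

lemma len_le (l : List S) : D.len ((l.map D.r).prod) ≤ l.length :=
  Nat.sInf_le ⟨l, rfl, rfl⟩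

lemma exists_min_word (w : W) :
    ∃ l : List S, l.length = D.len w ∧ (l.map D.r).prod = w := by
  obtain ⟨l, hl⟩ := D.exists_word w
  have hne : {n | ∃ l : List S, l.length = n ∧ (l.map D.r).prod = w}.Nonempty :=
    ⟨l.length, l, rfl, hl⟩
  exact Nat.sInf_mem hne

end Length

section Walk

lemma walk (l : List S) {z : V₁} (hz : z ∈ D.PhiPos₁)
    (hneg : D.ρ₁ ((l.map D.r).prod) z ∈ D.PhiNeg₁) :
    ∃ (l₁ l₂ : List S) (s : S), l = l₁ ++ s :: l₂ ∧
      D.ρ₁ ((l₂.map D.r).prod) z ∈ D.PhiPos₁ ∧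
      D.ρ₁ (D.r s) (D.ρ₁ ((l₂.map D.r).prod) z) ∈ D.PhiNeg₁ := by
  induction l with
  | nil =>
    exfalso
    rw [List.map_nil, List.prod_nil, map_one, Module.End.one_apply] at hneg
    exact D.not_pos_and_neg hz hneg
  | cons s l ih =>
    have hsplit : D.ρ₁ (((s :: l).map D.r).prod) z
        = D.ρ₁ (D.r s) (D.ρ₁ ((l.map D.r).prod) z) := by
      rw [List.map_cons, List.prod_cons, map_mul, Module.End.mul_apply]
    have hmem : D.ρ₁ ((l.map D.r).prod) z ∈ D.Phi₁ :=
      D.rho_mem_Phi₁ _ (D.pos_subset_Phi₁ hz)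
    rcases D.pos_or_neg hmem with hp | hn
    · exact ⟨[], l, s, rfl, hp, by rw [← hsplit]; exact hneg⟩
    · obtain ⟨l₁, l₂, s', heq, h1, h2⟩ := ih hn
      exact ⟨s :: l₁, l₂, s', by rw [heq, List.cons_append], h1, h2⟩

/-- Key bridge direction: if `w` sends the positive root `z` to a negative root, then
`w · r_z` is shorter than `w`. -/
lemma len_mul_refl_lt {c : W} {z : V₁} (hz : z ∈ D.PhiPos₁)
    (hneg : D.ρ₁ c z ∈ D.PhiNeg₁) : D.len (c * D.refl₁ z) < D.len c := by
  obtain ⟨l, hlen, hprod⟩ := D.exists_min_word c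
  obtain ⟨l₁, l₂, s, heq, h1, h2⟩ := D.walk l hz (by rw [hprod]; exact hneg)
  set p₂ : W := (l₂.map D.r).prod with hp₂
  obtain ⟨lam, hlam, hv⟩ := D.eq_smul_simple_of_neg s h1 h2
  have hzΦ : z ∈ D.Phi₁ := D.pos_subset_Phi₁ hz
  have hvΦ : lam • D.α s ∈ D.Phi₁ := by rw [← hv]; exact D.rho_mem_Phi₁ p₂ hzΦ
  have hray : D.refl₁ (D.ρ₁ p₂ z) = D.r s := by rw [hv]; exact D.refl₁_ray s hlam.ne' hvΦ
  have hconj : D.refl₁ (D.ρ₁ p₂ z) = p₂ * D.refl₁ z * p₂⁻¹ := D.refl₁_conj hzΦ p₂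
  have hrz : D.refl₁ z = p₂⁻¹ * D.r s * p₂ := by
    rw [← hray, hconj]; group
  have hcprod : c = ((l₁.map D.r).prod) * D.r s * p₂ := by
    rw [← hprod, heq, List.map_append, List.prod_append, List.map_cons, List.prod_cons, hp₂]
    group
  have hcr : c * D.refl₁ z = ((l₁ ++ l₂).map D.r).prod := by
    rw [hcprod, hrz, List.map_append, List.prod_append, ← hp₂]
    have : (l₁.map D.r).prod * D.r s * p₂ * (p₂⁻¹ * D.r s * p₂)
        = (l₁.map D.r).prod * (D.r s * D.r s) * p₂ := by group
    rw [this, D.r_sq, mul_one]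
  have hlt : (l₁ ++ l₂).length < l.length := by
    rw [heq]
    simp only [List.length_append, List.length_cons]
    omega
  calc D.len (c * D.refl₁ z) ≤ (l₁ ++ l₂).length := by rw [hcr]; exact D.len_le _
    _ < l.length := hlt
    _ = D.len c := hlen

/-- The key consequence of being a canonical generator: if `c ∈ S(W')` makes the
positive root `z` of a reflection of `W'` negative, then `r_z = c`. -/
lemma star {W' : Subgroup W} {c : W} (hc : c ∈ D.SW W') {z : V₁} (hz : z ∈ D.PhiPos₁)
    (hz' : D.refl₁ z ∈ W') (hneg : D.ρ₁ c z ∈ D.PhiNeg₁) : D.refl₁ z = c := by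
  have hmem : D.refl₁ z ∈ D.Nbar c ∩ (W' : Set W) :=
    ⟨⟨D.refl₁_mem_T (D.pos_subset_Phi₁ hz), D.len_mul_refl_lt hz hneg⟩, hz'⟩
  rw [hc.2] at hmem
  exact hmem

end Walk

end CoxeterDatum

section AltEnd

variable {G : Type*} [Group G]

lemma altEnd_succ_left (a b : G) (m : ℕ) :
    altEnd a b (m + 1) = (if Even m then b else a) * altEnd a b m := by
  induction m generalizing a b with
  | zero => simp [altEnd]
  | succ m ih =>
    have h1 : altEnd a b (m + 2) = altEnd b a (m + 1) * b := rfl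
    have h2 : altEnd a b (m + 1) = altEnd b a m * b := rfl
    rw [h1, ih b a, h2]
    by_cases h : Even m <;> simp [h, Nat.even_add_one, mul_assoc]

lemma altEnd_two_mul (a b : G) (k : ℕ) : altEnd a b (2 * k) = (a * b) ^ k := by
  induction k with
  | zero => simp [altEnd]
  | succ k ih =>
    have h1 : 2 * (k + 1) = 2 * k + 1 + 1 := by ring
    have h2 : altEnd a b (2 * k + 1 + 1) = altEnd b a (2 * k + 1) * b := rfl
    have h3 : altEnd b a (2 * k + 1) = altEnd a b (2 * k) * a := rfl
    rw [h1, h2, h3, ih, pow_succ, mul_assoc]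

lemma altEnd_two_mul_add_one (a b : G) (k : ℕ) :
    altEnd a b (2 * k + 1) = b * (a * b) ^ k := by
  induction k with
  | zero => simp [altEnd]
  | succ k ih =>
    have h1 : 2 * (k + 1) + 1 = 2 * k + 1 + 1 + 1 := by ring
    have h2 : altEnd a b (2 * k + 1 + 1 + 1) = altEnd b a (2 * k + 1 + 1) * b := rfl
    have h3 : altEnd b a (2 * k + 1 + 1) = altEnd a b (2 * k + 1) * a := rfl
    rw [h1, h2, h3, ih, pow_succ]
    group

lemma altEnd_mem {H : Subgroup G} : ∀ (m : ℕ) (a b : G), a ∈ H → b ∈ H → altEnd a b m ∈ H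
  | 0, _, _, _, _ => H.one_mem
  | (m + 1), a, b, ha, hb => H.mul_mem (altEnd_mem m b a hb ha) hb

/-- Dihedral relation, even case. -/
lemma dihedral_rel_even {t u : G} (ht : t * t = 1) (hu : u * u = 1) (k : ℕ)
    (h : (t * u) ^ k * t * ((t * u) ^ k)⁻¹ = u) : (t * u) ^ (2 * k + 1) = 1 := by
  have huinv : u⁻¹ = u := inv_eq_of_mul_eq_one_right hu
  have hconj : u * (t * u) ^ k * u = ((t * u) ^ k)⁻¹ := by
    have h1 : u * (t * u) * u⁻¹ = (t * u)⁻¹ := by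
      rw [huinv, mul_inv_rev, huinv, inv_eq_of_mul_eq_one_right ht]
      calc u * (t * u) * u = u * t * (u * u) := by group
        _ = u * t := by rw [hu, mul_one]
    have h2 : (u * (t * u) * u⁻¹) ^ k = u * (t * u) ^ k * u⁻¹ := conj_pow
    rw [h1] at h2
    rw [← inv_pow, h2, huinv]
  have hgt : (t * u) ^ k * t = u * (t * u) ^ k := by
    calc (t * u) ^ k * t = (t * u) ^ k * t * ((t * u) ^ k)⁻¹ * (t * u) ^ k := by group
      _ = u * (t * u) ^ k := by rw [h]
  calc (t * u) ^ (2 * k + 1) = (t * u) ^ k * (t * u) ^ k * (t * u) := by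
        rw [← pow_add, ← pow_succ]
        congr 1
        omega
    _ = (t * u) ^ k * ((t * u) ^ k * t) * u := by group
    _ = (t * u) ^ k * (u * (t * u) ^ k) * u := by rw [hgt]
    _ = (t * u) ^ k * (u * (t * u) ^ k * u) := by group
    _ = (t * u) ^ k * ((t * u) ^ k)⁻¹ := by rw [hconj]
    _ = 1 := by group

/-- Dihedral relation, odd case. -/
lemma dihedral_rel_odd {t u : G} (ht : t * t = 1) (hu : u * u = 1) (k : ℕ)
    (h : (u * (t * u) ^ k) * t * (u * (t * u) ^ k)⁻¹ = t) : (t * u) ^ (2 * k + 2) = 1 := by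
  have htinv : t⁻¹ = t := inv_eq_of_mul_eq_one_right ht
  have huinv : u⁻¹ = u := inv_eq_of_mul_eq_one_right hu
  have hconj : t * ((t * u) ^ k)⁻¹ * t = (t * u) ^ k := by
    have h1 : t * (t * u) * t⁻¹ = (t * u)⁻¹ := by
      rw [htinv, mul_inv_rev, htinv, huinv]
      calc t * (t * u) * t = (t * t) * (u * t) := by group
        _ = u * t := by rw [ht, one_mul]
    have h2 : (t * (t * u) * t⁻¹) ^ k = t * (t * u) ^ k * t⁻¹ := conj_pow
    rw [h1, inv_pow] at h2
    rw [h2, htinv]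
    calc t * (t * (t * u) ^ k * t) * t = (t * t) * (t * u) ^ k * (t * t) := by group
      _ = (t * u) ^ k := by rw [ht]; group
  have e2 : (t * u) ^ k * t = t * ((t * u) ^ k)⁻¹ := by
    calc (t * u) ^ k * t = (t * ((t * u) ^ k)⁻¹ * t) * t := by rw [hconj]
      _ = t * ((t * u) ^ k)⁻¹ * (t * t) := by group
      _ = t * ((t * u) ^ k)⁻¹ := by rw [ht, mul_one]
  have h3 : u * ((t * u) ^ k * (t * u) ^ k * t) * u = t := by
    calc u * ((t * u) ^ k * (t * u) ^ k * t) * u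
        = u * (t * u) ^ k * ((t * u) ^ k * t) * u := by group
      _ = u * (t * u) ^ k * (t * ((t * u) ^ k)⁻¹) * u := by rw [e2]
      _ = (u * (t * u) ^ k) * t * (((t * u) ^ k)⁻¹ * u⁻¹) := by rw [huinv]; group
      _ = (u * (t * u) ^ k) * t * (u * (t * u) ^ k)⁻¹ := by rw [mul_inv_rev]
      _ = t := h
  have h4 : (t * u) ^ k * (t * u) ^ k * t = u * t * u := by
    calc (t * u) ^ k * (t * u) ^ k * t
        = (u * u) * ((t * u) ^ k * (t * u) ^ k * t) * (u * u) := by rw [hu]; group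
      _ = u * (u * ((t * u) ^ k * (t * u) ^ k * t) * u) * u := by group
      _ = u * t * u := by rw [h3]
  calc (t * u) ^ (2 * k + 2) = (t * u) ^ k * (t * u) ^ k * (t * u) * (t * u) := by
        rw [← pow_add, ← pow_succ, ← pow_succ]
        congr 1
        omega
    _ = ((t * u) ^ k * (t * u) ^ k * t) * (u * t * u) := by group
    _ = (u * t * u) * (u * t * u) := by rw [h4]
    _ = u * t * (u * u) * t * u := by group
    _ = u * (t * t) * u := by rw [hu]; group
    _ = u * u := by rw [ht]; group
    _ = 1 := hu

end AltEnd

namespace CoxeterDatum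

variable {S V₁ V₂ W : Type*} [AddCommGroup V₁] [Module ℝ V₁]
  [AddCommGroup V₂] [Module ℝ V₂] [Group W]

variable (D : CoxeterDatum S V₁ V₂ W)

section Main

lemma mem_of_SW {W' : Subgroup W} {t : W} (ht : t ∈ D.SW W') : t ∈ W' := by
  have h : t ∈ D.Nbar t ∩ (W' : Set W) := by
    rw [ht.2]; rfl
  exact h.2

/-- Main induction: alternating products applied to the first root stay positive. -/
lemma main₁ {W' : Subgroup W} {x y : V₁} (hx : x ∈ D.Delta₁ W') (hy : y ∈ D.Delta₁ W')
    (m : ℕ)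
    (hm : m < orderOf (D.refl₁ x * D.refl₁ y) ∨ ¬ IsOfFinOrder (D.refl₁ x * D.refl₁ y)) :
    D.ρ₁ (altEnd (D.refl₁ x) (D.refl₁ y) m) x ∈ D.PhiPos₁ := by
  set t := D.refl₁ x with htdef
  set u := D.refl₁ y with hudef
  have hxpos : x ∈ D.PhiPos₁ := hx.1
  have hxΦ : x ∈ D.Phi₁ := D.pos_subset_Phi₁ hxpos
  have hyΦ : y ∈ D.Phi₁ := D.pos_subset_Phi₁ hy.1
  have htSW : t ∈ D.SW W' := hx.2
  have huSW : u ∈ D.SW W' := hy.2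
  have htW' : t ∈ W' := D.mem_of_SW htSW
  have huW' : u ∈ W' := D.mem_of_SW huSW
  have htsq : t * t = 1 := D.refl₁_sq hxΦ
  have husq : u * u = 1 := D.refl₁_sq hyΦ
  induction m with
  | zero =>
    have : altEnd t u 0 = 1 := rfl
    rw [this, map_one, Module.End.one_apply]
    exact hxpos
  | succ j ih =>
    have hm' : j < orderOf (t * u) ∨ ¬ IsOfFinOrder (t * u) :=
      hm.imp (fun h => lt_trans (Nat.lt_succ_self j) h) id
    have hA : D.ρ₁ (altEnd t u j) x ∈ D.PhiPos₁ := ih hm'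
    set c : W := if Even j then u else t with hcdef
    have hstep : D.ρ₁ (altEnd t u (j + 1)) x = D.ρ₁ c (D.ρ₁ (altEnd t u j) x) := by
      rw [altEnd_succ_left, map_mul, Module.End.mul_apply]
    have hmemΦ : D.ρ₁ (altEnd t u (j + 1)) x ∈ D.Phi₁ := D.rho_mem_Phi₁ _ hxΦ
    rcases D.pos_or_neg hmemΦ with hp | hn
    · exact hp
    · exfalso
      -- the canonical generator c makes the positive root A_j negative
      have hcSW : c ∈ D.SW W' := by
        rw [hcdef]; split
        · exact huSW
        · exact htSW
      have hreflW' : D.refl₁ (D.ρ₁ (altEnd t u j) x) ∈ W' := by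
        rw [D.refl₁_conj hxΦ]
        exact W'.mul_mem (W'.mul_mem (altEnd_mem j t u htW' huW') htW')
          (W'.inv_mem (altEnd_mem j t u htW' huW'))
      have heq : D.refl₁ (D.ρ₁ (altEnd t u j) x) = c :=
        D.star hcSW hA hreflW' (by rw [← hstep]; exact hn)
      have hconj : altEnd t u j * t * (altEnd t u j)⁻¹ = c := by
        rw [← heq, D.refl₁_conj hxΦ]
      -- derive the dihedral relation (t u)^(j+1) = 1
      have hrel : (t * u) ^ (j + 1) = 1 := by
        rcases Nat.even_or_odd j with hj | hj
        · obtain ⟨k, hk⟩ := hj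
          have hj2 : j = 2 * k := by omega
          have hc : c = u := by rw [hcdef, if_pos (by exact ⟨k, by omega⟩)]
          rw [hj2, altEnd_two_mul] at hconj
          rw [hc] at hconj
          have := dihedral_rel_even htsq husq k hconj
          rw [hj2]
          exact this
        · obtain ⟨k, hk⟩ := hj
          have hc : c = t := by
            rw [hcdef, if_neg (Nat.not_even_iff_odd.mpr ⟨k, hk⟩)]
          rw [hk, altEnd_two_mul_add_one] at hconj
          rw [hc] at hconj
          have := dihedral_rel_odd htsq husq k hconj
          have h2 : 2 * k + 1 + 1 = 2 * k + 2 := by omega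
          rw [hk, h2]
          exact this
      rcases hm with hlt | hinf
      · have := orderOf_le_of_pow_eq_one (Nat.succ_pos j) hrel
        omega
      · exact hinf (isOfFinOrder_iff_pow_eq_one.mpr ⟨j + 1, Nat.succ_pos j, hrel⟩)
end Main

end CoxeterDatum

namespace CoxeterDatum

variable {S V₁ V₂ W : Type*} [AddCommGroup V₁] [Module ℝ V₁]
  [AddCommGroup V₂] [Module ℝ V₂] [Group W]

variable (D : CoxeterDatum S V₁ V₂ W)

section Flip

lemma phiInv_simple (s : S) : D.phiInv (D.β s) = D.α s := by
  rw [← D.phi_simple s]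
  exact D.phiInv_phi _ (D.simple_mem_Phi₁ s)

lemma phiInv_rho (w : W) {y : V₂} (hy : y ∈ D.Phi₂) :
    D.phiInv (D.ρ₂ w y) = D.ρ₁ w (D.phiInv y) := by
  obtain ⟨v, s, rfl⟩ := hy
  have h1 : D.ρ₂ v (D.β s) = D.phi (D.ρ₁ v (D.α s)) := by
    rw [D.phi_rho (D.simple_mem_Phi₁ s) v, D.phi_simple]
  rw [h1, ← D.phi_rho (D.rho_mem_Phi₁ v (D.simple_mem_Phi₁ s)) w,
    D.phiInv_phi _ (D.rho_mem_Phi₁ w (D.rho_mem_Phi₁ v (D.simple_mem_Phi₁ s))),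
    D.phiInv_phi _ (D.rho_mem_Phi₁ v (D.simple_mem_Phi₁ s))]

/-- The "flipped" Coxeter datum, exchanging the roles of `V₁` and `V₂`. -/
def flip : CoxeterDatum S V₂ V₁ W where
  pair := D.pair.flip
  α := D.β
  β := D.α
  α_inj := D.β_inj
  β_inj := D.α_inj
  D1 := D.D1
  D2a := D.D2b
  D2b := D.D2a
  D2c := D.D2d
  D2d := D.D2c
  D3 := fun s t h => D.D3 t s h.symm
  D4 := fun s t h => D.D4 t s h
  D5 := fun s t h => D.D5 t s h.symm
  r := D.r
  r_gen := D.r_gen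
  r_ne_one := D.r_ne_one
  r_sq := D.r_sq
  ρ₁ := D.ρ₂
  ρ₂ := D.ρ₁
  ρ₁_inj := D.ρ₂_inj
  ρ₂_inj := D.ρ₁_inj
  hr₁ := fun s x => D.hr₂ s x
  hr₂ := fun s y => D.hr₁ s y
  pair_inv := fun w x y => D.pair_inv w y x
  phi := D.phiInv
  phiInv := D.phi
  refl₁ := D.refl₂
  refl₂ := D.refl₁
  decomp₁ := D.decomp₂
  disj₁ := D.disj₂
  decomp₂ := D.decomp₁
  disj₂ := D.disj₁
  phi_mem := D.phiInv_mem
  phiInv_mem := D.phi_mem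
  phiInv_phi := D.phi_phiInv
  phi_phiInv := D.phiInv_phi
  phi_simple := D.phiInv_simple
  phi_equiv := fun w y hy => D.phiInv_rho w hy
  refl₁_eq := D.refl₂_eq
  refl₂_eq := D.refl₁_eq
  refl₁_act := fun y hy v => D.refl₂_act y hy v
  refl₂_act := fun x hx v => D.refl₁_act x hx v

end Flip

end CoxeterDatum
/-- Let `W'` be a reflection subgroup of `W`, `i ∈ {1,2}`, and
`x, y ∈ Δᵢ(W')` with `r_x ≠ r_y`.  Let `n` be the order of `r_x r_y` (possibly
infinite; `IsOfFinOrder` fails and `orderOf = 0` in the infinite case).  Then for all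
`0 ≤ m < n`, `(⋯ r_y r_x r_y) x ∈ Φᵢ⁺` and `(⋯ r_x r_y r_x) y ∈ Φᵢ⁺` (alternating
products of `m` factors). -/
theorem stmt17 {S V₁ V₂ W : Type*} [AddCommGroup V₁] [Module ℝ V₁]
    [AddCommGroup V₂] [Module ℝ V₂] [Group W]
    (D : CoxeterDatum S V₁ V₂ W)
    (W' : Subgroup W) (hW' : D.IsReflectionSubgroup W') :
    (∀ x ∈ D.Delta₁ W', ∀ y ∈ D.Delta₁ W', D.refl₁ x ≠ D.refl₁ y →
      ∀ m : ℕ,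
        (m < orderOf (D.refl₁ x * D.refl₁ y) ∨
          ¬ IsOfFinOrder (D.refl₁ x * D.refl₁ y)) →
        D.ρ₁ (altEnd (D.refl₁ x) (D.refl₁ y) m) x ∈ D.PhiPos₁ ∧
        D.ρ₁ (altEnd (D.refl₁ y) (D.refl₁ x) m) y ∈ D.PhiPos₁) ∧
    (∀ x ∈ D.Delta₂ W', ∀ y ∈ D.Delta₂ W', D.refl₂ x ≠ D.refl₂ y →
      ∀ m : ℕ,
        (m < orderOf (D.refl₂ x * D.refl₂ y) ∨
          ¬ IsOfFinOrder (D.refl₂ x * D.refl₂ y)) →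
        D.ρ₂ (altEnd (D.refl₂ x) (D.refl₂ y) m) x ∈ D.PhiPos₂ ∧
        D.ρ₂ (altEnd (D.refl₂ y) (D.refl₂ x) m) y ∈ D.PhiPos₂) := by
  constructor
  · intro x hx y hy _ m hm
    have hxΦ : x ∈ D.Phi₁ := D.pos_subset_Phi₁ hx.1
    have hyΦ : y ∈ D.Phi₁ := D.pos_subset_Phi₁ hy.1
    have hswap : D.refl₁ y * D.refl₁ x = (D.refl₁ x * D.refl₁ y)⁻¹ := by
      rw [mul_inv_rev, inv_eq_of_mul_eq_one_right (D.refl₁_sq hxΦ),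
        inv_eq_of_mul_eq_one_right (D.refl₁_sq hyΦ)]
    refine ⟨D.main₁ hx hy m hm, D.main₁ hy hx m ?_⟩
    rw [hswap, orderOf_inv, isOfFinOrder_inv_iff]
    exact hm
  · intro x hx y hy _ m hm
    have hx' : x ∈ (D.flip).Delta₁ W' := hx
    have hy' : y ∈ (D.flip).Delta₁ W' := hy
    have hxΦ : x ∈ (D.flip).Phi₁ := (D.flip).pos_subset_Phi₁ hx'.1
    have hyΦ : y ∈ (D.flip).Phi₁ := (D.flip).pos_subset_Phi₁ hy'.1
    have hswap : (D.flip).refl₁ y * (D.flip).refl₁ x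
        = ((D.flip).refl₁ x * (D.flip).refl₁ y)⁻¹ := by
      rw [mul_inv_rev, inv_eq_of_mul_eq_one_right ((D.flip).refl₁_sq hxΦ),
        inv_eq_of_mul_eq_one_right ((D.flip).refl₁_sq hyΦ)]
    refine ⟨(D.flip).main₁ hx' hy' m hm, (D.flip).main₁ hy' hx' m ?_⟩
    rw [hswap, orderOf_inv, isOfFinOrder_inv_iff]
    exact hm
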